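/- arXiv:1509.08811 — 2 statements merged into one kernel-verified Lean document; each statement's English description precedes it below -/
import Mathlib

section
/- If f is an even polynomial of degree at most 2j with f(0) = 0, then f is a rational linear combination of B_1, …, B_j only (no B_0 term), where B_k(x) = C(x+k, 2k) + C(-x+k, 2k). -/
/-!
`B_k` is even (substituting `-X` swaps its two summands), vanishes at `0` for `k ≥ 1` (the
factor `X + k - k` of `C(X + k, 2k)`), and has degree `2k` with leading coefficient `2 / (2k)!`.
An even polynomial has no odd coefficients, so subtracting the right multiple of `B_j` from `f`
lowers its degree from `2j` to at most `2j - 2` while keeping it even and zero at `0`; induct on `j`.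
-/

/-- Binomial coefficient polynomial `x(x-1)...(x-j+1)/j!` at integer `x`; zero for `j < 0`. -/
def binC (x j : ℤ) : ℚ :=
  if j < 0 then 0 else (∏ t ∈ Finset.range j.toNat, ((x : ℚ) - t)) / (j.toNat).factorial

open Polynomial in
/-- The binomial coefficient polynomial `p(p-1)...(p-n+1)/n!` of a polynomial `p`,
zero for negative `n`. -/
noncomputable def Cpol (p : Polynomial ℚ) (n : ℤ) : Polynomial ℚ :=
  if n < 0 then 0 else
    C (1 / (n.toNat).factorial : ℚ) * ∏ t ∈ Finset.range n.toNat, (p - C (t : ℚ))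

open Polynomial in
/-- `B_k = C(X+k, 2k) + C(-X+k, 2k)` as a polynomial. -/
noncomputable def Bpol (k : ℕ) : Polynomial ℚ :=
  Cpol (X + C (k : ℚ)) (2 * k) + Cpol (-X + C (k : ℚ)) (2 * k)

open Polynomial Finset

section OddCoeff

variable {R : Type*}

lemma coeff_eq_zero_of_comp_neg_X_eq_self [CommRing R] [NoZeroDivisors R] [CharZero R]
    {f : R[X]} (hf : f.comp (-X) = f) {n : ℕ} (hn : Odd n) : f.coeff n = 0 := by
  have h : f.coeff n * (-1) ^ n = f.coeff n := by
    rw [← comp_C_mul_X_coeff, C_neg, C_1, neg_one_mul, hf]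
  rwa [hn.neg_one_pow, mul_neg_one, CharZero.neg_eq_self_iff] at h

lemma natDegree_le_of_coeff_odd_eq_zero [Semiring R] {g : R[X]} {j : ℕ}
    (hodd : ∀ n, Odd n → g.coeff n = 0) (hdeg : g.natDegree ≤ 2 * (j + 1))
    (htop : g.coeff (2 * (j + 1)) = 0) : g.natDegree ≤ 2 * j := by
  rw [natDegree_le_iff_coeff_eq_zero]
  intro N hN
  rcases lt_trichotomy N (2 * (j + 1)) with h | rfl | h
  · exact hodd N ⟨j, by omega⟩
  · exact htop
  · exact coeff_eq_zero_of_natDegree_lt (hdeg.trans_lt h)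

end OddCoeff

theorem exists_eq_sum_C_mul_of_coeff_odd_eq_zero {K : Type*} [Field K] (Q : ℕ → K[X])
    (hQodd : ∀ k n, Odd n → (Q k).coeff n = 0) (hQ0 : ∀ k, (Q k).coeff 0 = 0)
    (hQdeg : ∀ k, (Q k).natDegree ≤ 2 * (k + 1)) (hQtop : ∀ k, (Q k).coeff (2 * (k + 1)) ≠ 0)
    (j : ℕ) (f : K[X]) (hodd : ∀ n, Odd n → f.coeff n = 0) (h0 : f.coeff 0 = 0)
    (hdeg : f.natDegree ≤ 2 * j) :
    ∃ c : Fin j → K, f = ∑ k : Fin j, C (c k) * Q k := by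
  induction j generalizing f with
  | zero =>
    refine ⟨Fin.elim0, ?_⟩
    rw [eq_C_of_natDegree_le_zero (p := f) (by simpa using hdeg), h0]
    simp
  | succ j ih =>
    set a := f.coeff (2 * (j + 1)) / (Q j).coeff (2 * (j + 1))
    set g := f - C a * Q j with hg
    have hgodd : ∀ n, Odd n → g.coeff n = 0 := fun n hn => by
      simp [hg, hodd n hn, hQodd j n hn]
    have hg0 : g.coeff 0 = 0 := by simp [hg, h0, hQ0]
    have hgtop : g.coeff (2 * (j + 1)) = 0 := by
      simp [hg, a, div_mul_cancel₀ _ (hQtop j)]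
    have hgdeg : g.natDegree ≤ 2 * (j + 1) :=
      (natDegree_sub_le _ _).trans
        (max_le hdeg ((natDegree_C_mul_le _ _).trans (hQdeg j)))
    obtain ⟨c, hc⟩ := ih g hgodd hg0 (natDegree_le_of_coeff_odd_eq_zero hgodd hgdeg hgtop)
    refine ⟨Fin.snoc c a, ?_⟩
    rw [← sub_add_cancel f (C a * Q j), ← hg, hc, Fin.sum_univ_castSucc]
    simp

lemma Cpol_natCast (p : ℚ[X]) (n : ℕ) :
    Cpol p n = C (1 / n.factorial : ℚ) * ∏ t ∈ range n, (p - C (t : ℚ)) := by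
  simp [Cpol]

lemma Cpol_comp (p q : ℚ[X]) (n : ℤ) : (Cpol p n).comp q = Cpol (p.comp q) n := by
  unfold Cpol
  split_ifs <;> simp [mul_comp, Polynomial.prod_comp]

lemma eval_Cpol_eq_zero {p : ℚ[X]} {x : ℚ} {n t : ℕ} (ht : t < n) (hp : p.eval x = t) :
    (Cpol p n).eval x = 0 := by
  rw [Cpol_natCast, eval_mul, eval_prod, prod_eq_zero (mem_range.2 ht) (by simp [hp]), mul_zero]

lemma natDegree_Cpol_le {p : ℚ[X]} {d : ℕ} (hp : p.natDegree ≤ d) (n : ℕ) :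
    (Cpol p n).natDegree ≤ n * d := by
  rw [Cpol_natCast]
  refine (natDegree_C_mul_le _ _).trans ((natDegree_prod_le _ _).trans
    ((sum_le_card_nsmul _ _ d fun t _ => natDegree_sub_C.le.trans hp).trans ?_))
  simp

lemma coeff_Cpol {p : ℚ[X]} {d : ℕ} (hd : d ≠ 0) (hp : p.natDegree ≤ d) (n : ℕ) :
    (Cpol p n).coeff (n * d) = p.coeff d ^ n / n.factorial := by
  have hprod := coeff_prod_of_natDegree_le (range n) (fun t : ℕ => p - C (t : ℚ)) d
    fun t _ => natDegree_sub_C.le.trans hp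
  rw [card_range] at hprod
  rw [Cpol_natCast, coeff_C_mul, hprod]
  simp [div_eq_inv_mul, coeff_sub, hd]

lemma natDegree_neg_X_add_C {R : Type*} [Ring R] [Nontrivial R] (c : R) :
    (-X + C c).natDegree = 1 := by
  rw [natDegree_add_C, natDegree_neg, natDegree_X]

lemma Bpol_eq_Cpol_natCast (k : ℕ) :
    Bpol k = Cpol (X + C (k : ℚ)) (2 * k : ℕ) + Cpol (-X + C (k : ℚ)) (2 * k : ℕ) := by
  simp [Bpol]

lemma Bpol_comp_neg_X (k : ℕ) : (Bpol k).comp (-X) = Bpol k := by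
  simp [Bpol, Cpol_comp, add_comm]

lemma natDegree_Bpol_le (k : ℕ) : (Bpol k).natDegree ≤ 2 * k := by
  rw [Bpol_eq_Cpol_natCast]
  exact (natDegree_add_le_of_degree_le
    (natDegree_Cpol_le (natDegree_X_add_C _).le (2 * k))
    (natDegree_Cpol_le (natDegree_neg_X_add_C _).le (2 * k))).trans_eq (mul_one _)

lemma coeff_Bpol_two_mul (k : ℕ) : (Bpol k).coeff (2 * k) = 2 / (2 * k).factorial := by
  have e1 := coeff_Cpol one_ne_zero (natDegree_X_add_C (k : ℚ)).le (2 * k)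
  have e2 := coeff_Cpol one_ne_zero (natDegree_neg_X_add_C (k : ℚ)).le (2 * k)
  rw [mul_one] at e1 e2
  rw [Bpol_eq_Cpol_natCast, coeff_add, e1, e2]
  simp [pow_mul]
  ring

lemma coeff_zero_Bpol {k : ℕ} (hk : k ≠ 0) : (Bpol k).coeff 0 = 0 := by
  rw [coeff_zero_eq_eval_zero, Bpol_eq_Cpol_natCast, eval_add,
    eval_Cpol_eq_zero (t := k) (by omega) (by simp),
    eval_Cpol_eq_zero (t := k) (by omega) (by simp), add_zero]

theorem even_poly_basis_no_B0 (j : ℕ) (f : Polynomial ℚ)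
    (heven : ∀ x : ℚ, f.eval (-x) = f.eval x) (hdeg : f.natDegree ≤ 2 * j)
    (h0 : f.eval 0 = 0) :
    ∃ c : Fin j → ℚ, f = ∑ k : Fin j, C (c k) * Bpol (k + 1) := by
  have hcomp : f.comp (-X) = f := Polynomial.funext fun x => by simp [heven]
  exact exists_eq_sum_C_mul_of_coeff_odd_eq_zero (fun k => Bpol (k + 1))
    (fun k _ hn => coeff_eq_zero_of_comp_neg_X_eq_self (Bpol_comp_neg_X _) hn)
    (fun k => coeff_zero_Bpol k.succ_ne_zero) (fun k => natDegree_Bpol_le _)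
    (fun k => by rw [coeff_Bpol_two_mul]; positivity) j f
    (fun _ => coeff_eq_zero_of_comp_neg_X_eq_self hcomp) (by rwa [coeff_zero_eq_eval_zero]) hdeg
end

section
/- For all integers m and k, the relation rel2(m,k) = 0 holds, where rel2(m,k) = −4((m−1)²−1)·d(m−1,k−1) − 4(2(k−1)+m+1)(m−k+1)·d(m,k−1) + k(2k−m−2)·d(m,k). -/
/-- The coefficients `d(m,k)`; zero for `m < 0`. -/
noncomputable def dd (m k : ℤ) : ℚ :=
  if m < 0 then 0 else
  ∑ i ∈ Finset.Icc 0 m, ∑ j ∈ Finset.Icc k m,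
    3 * (-1 : ℚ) ^ (k + j) * binC (2 * k) k * binC j i * binC m i * binC i (m - j) /
      (2 * (2 * i - 1) * (2 * j + 1) * (2 * m - 2 * i - 1))

noncomputable def rel2 (m k : ℤ) : ℚ :=
  -4 * ((m - 1) ^ 2 - 1) * dd (m - 1) (k - 1) -
    4 * (2 * (k - 1) + m + 1) * (m - k + 1) * dd m (k - 1) +
    k * (2 * k - m - 2) * dd m k

/-!
Exchanging the sums, `d(m,k) = ∑_{k ≤ j ≤ m} w(k,j) S(m,j)` with
`w(k,j) = 3 (-1)^(k+j) C(2k,k) / (2(2j+1))` and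
`S(m,j) = ∑_i C(j,i) C(m,i) C(i,m-j) / ((2i-1)(2m-2i-1))`.
The summand of `S` is hypergeometric in `i`, and Zeilberger's algorithm gives the recurrence
`A₁ S(m-1,j-1) + A₂ S(m,j-1) + A₃ S(m,j) = 0`, certified termwise by the telescoping `innerCert`.
Multiplied by `outerFactor k j`, this recurrence reproduces the `j`-th summand of `rel2 m k` up to
a difference `outerCert m k j - outerCert m k (j-1)`, so the sum over `k ≤ j ≤ m+1` collapses
to two boundary terms: `outerCert m k (k-1)` has a vanishing coefficient, and
`outerCert m k (m+1)` contains `S(m,m+1) = 0`.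
-/

open Finset Polynomial
open scoped Nat

lemma binC_of_neg (x : ℤ) {j : ℤ} (hj : j < 0) : binC x j = 0 := if_pos hj

lemma binC_natCast_eq_descPochhammer (x : ℤ) (n : ℕ) :
    binC x n = (descPochhammer ℚ n).eval (x : ℚ) / n ! := by
  simp [binC, descPochhammer_eval_eq_prod_range]

lemma binC_eq_zero_of_lt {x j : ℤ} (hx : 0 ≤ x) (hxj : x < j) : binC x j = 0 := by
  lift x to ℕ using hx
  lift j to ℕ using by omega
  rw [binC_natCast_eq_descPochhammer, Int.cast_natCast,
    descPochhammer_eval_coe_nat_of_lt (by omega), zero_div]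

lemma add_one_mul_binC_add_one (x j : ℤ) :
    ((j : ℚ) + 1) * binC x (j + 1) = (x - j) * binC x j := by
  rcases lt_trichotomy j (-1) with hj | rfl | hj
  · rw [binC_of_neg x (by omega : j < 0), binC_of_neg x (by omega : j + 1 < 0)]; ring
  · simp [binC_of_neg]
  · lift j to ℕ using by omega
    have h := binC_natCast_eq_descPochhammer x (j + 1)
    push_cast at h
    rw [h, binC_natCast_eq_descPochhammer, descPochhammer_succ_eval, Nat.factorial_succ]
    push_cast
    field_simp

lemma mul_binC_eq_mul_binC_sub_one (x j : ℤ) :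
    (j : ℚ) * binC x j = x * binC (x - 1) (j - 1) := by
  rcases lt_or_ge j 1 with hj | hj
  · rw [binC_of_neg _ (by omega : j - 1 < 0)]
    rcases (by omega : j < 0 ∨ j = 0) with hj' | rfl
    · rw [binC_of_neg x hj']; ring
    · simp
  · obtain ⟨n, rfl⟩ : ∃ n : ℕ, j = n + 1 := ⟨(j - 1).toNat, by omega⟩
    have h := binC_natCast_eq_descPochhammer x (n + 1)
    push_cast at h
    rw [h, add_sub_cancel_right, binC_natCast_eq_descPochhammer, descPochhammer_succ_left,
      eval_mul, eval_X, eval_comp, eval_sub, eval_X, eval_one, Nat.factorial_succ]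
    push_cast
    field_simp

lemma mul_binC_sub_one (x n : ℤ) : (x : ℚ) * binC (x - 1) n = (x - n) * binC x n := by
  have h := mul_binC_eq_mul_binC_sub_one x (n + 1)
  rw [add_sub_cancel_right] at h
  push_cast at h
  linear_combination -h + add_one_mul_binC_add_one x n

lemma binC_two_mul_self_eq {k : ℤ} (hk : k ≠ 0) :
    binC (2 * k) k = 2 * (2 * k - 1) * binC (2 * (k - 1)) (k - 1) / k := by
  have h₁ := mul_binC_eq_mul_binC_sub_one (2 * k) k
  have h₂ := mul_binC_sub_one (2 * k - 1) (k - 1)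
  rw [show 2 * k - 1 - 1 = 2 * (k - 1) by ring] at h₂
  push_cast at h₁ h₂
  rw [eq_div_iff (by exact_mod_cast hk)]
  linear_combination h₁ - 2 * h₂

lemma exists_binC_sub_one_eq_mul (x n : ℤ) (hx : x ≠ 0) :
    ∃ p : ℚ, binC (x - 1) (n - 1) = n * p ∧ binC (x - 1) n = (x - n) * p ∧ binC x n = x * p := by
  have hx' : (x : ℚ) ≠ 0 := by exact_mod_cast hx
  refine ⟨binC x n / x, ?_, ?_, by field_simp⟩
  · field_simp
    linear_combination (mul_binC_eq_mul_binC_sub_one x n).symm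
  · field_simp
    linear_combination mul_binC_sub_one x n

lemma exists_binC_eq_mul_add_one (x n : ℤ) (hx : x ≠ 0) (hn : n ≠ -1) :
    ∃ μ : ℚ, binC (x - 1) n = (x - n) * (n + 1) * μ ∧ binC x n = x * (n + 1) * μ ∧
      binC x (n + 1) = (x - n) * x * μ := by
  have hx' : (x : ℚ) ≠ 0 := by exact_mod_cast hx
  have hn' : (n : ℚ) + 1 ≠ 0 := by exact_mod_cast (by omega : n + 1 ≠ 0)
  refine ⟨binC x n / (x * (n + 1)), ?_, by field_simp, ?_⟩
  · field_simp
    linear_combination mul_binC_sub_one x n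
  · field_simp
    linear_combination add_one_mul_binC_add_one x n

namespace Int

lemma sum_Icc_telescope {M : Type*} [AddCommGroup M] (f : ℤ → M) {a b : ℤ} (h : a ≤ b + 1) :
    ∑ x ∈ Icc a b, (f x - f (x - 1)) = f b - f (a - 1) := by
  replace h : a - 1 ≤ b := by omega
  induction b, h using Int.leInduction with
  | base => simp
  | succ b hb ih =>
    rw [← insert_Icc_right_eq_Icc_add_one (by omega), sum_insert (by simp), ih,
      add_sub_cancel_right]
    abel

lemma sum_Icc_comp_sub_one {M : Type*} [AddCommMonoid M] (f : ℤ → M) (a b : ℤ) :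
    ∑ x ∈ Icc a b, f (x - 1) = ∑ x ∈ Icc (a - 1) (b - 1), f x := by
  rw [← sub_add_cancel a 1, ← sub_add_cancel b 1, ← map_add_right_Icc, sum_map]
  simp

end Int

def innerTerm (m j i : ℤ) : ℚ :=
  binC j i * binC m i * binC i (m - j) / ((2 * i - 1) * (2 * (m - i) - 1))

def innerCert (m j i : ℤ) : ℚ :=
  (2 * j + 1) * (m - j + 1) * binC (j - 1) i * binC m (i + 1) * binC (i + 1) (m - j + 1) /
    (2 * (m - i) - 3)

def innerCoeff₁ (m j : ℤ) : ℚ := 2 * m * (m - 2) * (2 * j + 1)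
def innerCoeff₂ (m j : ℤ) : ℚ := 2 * (2 * j + m - 1) * (m - j + 1) * (2 * j + 1)
def innerCoeff₃ (m j : ℤ) : ℚ := (2 * (2 * j + m + 1) * (m - j) - m * (2 * m + 1)) * (2 * j - 1)

lemma innerTerm_recurrence {m j i : ℤ} (hm : m ≠ 0) (hj : j ≠ 0) (hi : i ≠ -1) :
    innerCoeff₁ m j * innerTerm (m - 1) (j - 1) i + innerCoeff₂ m j * innerTerm m (j - 1) i +
      innerCoeff₃ m j * innerTerm m j i = innerCert m j i - innerCert m j (i - 1) := by
  obtain ⟨p, hp₀, hp₁, hp₂⟩ := exists_binC_sub_one_eq_mul j i hj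
  obtain ⟨μ, hμ₀, hμ₁, hμ₂⟩ := exists_binC_eq_mul_add_one m i hm (by omega)
  obtain ⟨q, hq₀, hq₁, hq₂⟩ := exists_binC_sub_one_eq_mul (i + 1) (m - j + 1) (by omega)
  simp only [add_sub_cancel_right] at hq₀ hq₁
  -- After these substitutions the identity is `p * μ * q * (i + 1)` times an identity between
  -- rational functions of `m, j, i`.
  have h₁ : (2 * (i : ℚ) - 1) ≠ 0 := by exact_mod_cast (by omega : 2 * i - 1 ≠ 0)
  have h₂ : 2 * ((m : ℚ) - i) - 1 ≠ 0 := by exact_mod_cast (by omega : 2 * (m - i) - 1 ≠ 0)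
  have h₃ : 2 * ((m : ℚ) - i) - 3 ≠ 0 := by exact_mod_cast (by omega : 2 * (m - i) - 3 ≠ 0)
  simp only [innerTerm, innerCert, innerCoeff₁, innerCoeff₂, innerCoeff₃,
    show m - 1 - (j - 1) = m - j by ring, show m - (j - 1) = m - j + 1 by ring, sub_add_cancel,
    hp₀, hp₁, hp₂, hμ₀, hμ₁, hμ₂, hq₀, hq₁, hq₂]
  push_cast
  rw [show 2 * ((m : ℚ) - 1 - i) - 1 = 2 * (m - i) - 3 by ring,
    show 2 * ((m : ℚ) - (i - 1)) - 3 = 2 * (m - i) - 1 by ring]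
  field_simp
  ring

noncomputable def innerSum (m j : ℤ) : ℚ := ∑ i ∈ Icc 0 m, innerTerm m j i

lemma innerSum_eq_zero_of_lt {m j : ℤ} (h : m < j) : innerSum m j = 0 :=
  sum_eq_zero fun i _ ↦ by simp [innerTerm, binC_of_neg i (by omega : m - j < 0)]

lemma innerSum_eq_sum_Icc {m n : ℤ} (j : ℤ) (hm : 0 ≤ m) (hn : m ≤ n) :
    innerSum m j = ∑ i ∈ Icc 0 n, innerTerm m j i :=
  sum_subset (Icc_subset_Icc_right hn) fun i hi hi' ↦ by
    simp only [mem_Icc, not_and, not_le] at hi hi'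
    simp [innerTerm, binC_eq_zero_of_lt hm (hi' hi.1)]

lemma innerSum_recurrence {m j : ℤ} (hm : 1 ≤ m) (hj : j ≠ 0) :
    innerCoeff₁ m j * innerSum (m - 1) (j - 1) + innerCoeff₂ m j * innerSum m (j - 1) +
      innerCoeff₃ m j * innerSum m j = 0 := by
  rw [innerSum_eq_sum_Icc _ (by omega) (by omega : m - 1 ≤ m), innerSum, innerSum, mul_sum, mul_sum,
    mul_sum, ← sum_add_distrib, ← sum_add_distrib,
    sum_congr rfl fun i hi ↦ innerTerm_recurrence (by omega) hj (by simp at hi; omega),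
    Int.sum_Icc_telescope _ (by omega)]
  simp [innerCert, binC_eq_zero_of_lt (by omega : 0 ≤ m) (by omega : m < m + 1), binC_of_neg]

def weight (k j : ℤ) : ℚ := 3 * (-1) ^ (k + j) * binC (2 * k) k / (2 * (2 * j + 1))

lemma dd_eq_sum (m k : ℤ) {n : ℤ} (hn : m ≤ n) :
    dd m k = ∑ j ∈ Icc k n, weight k j * innerSum m j := by
  rcases lt_or_ge m 0 with hm | hm
  · simp [dd, hm, innerSum]
  calc dd m k = ∑ j ∈ Icc k m, weight k j * innerSum m j := by
        rw [dd, if_neg (by omega), sum_comm]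
        refine sum_congr rfl fun j _ ↦ ?_
        rw [innerSum, mul_sum]
        refine sum_congr rfl fun i _ ↦ ?_
        rw [weight, innerTerm, div_mul_div_comm]
        congr 1 <;> ring
    _ = ∑ j ∈ Icc k n, weight k j * innerSum m j :=
        sum_subset (Icc_subset_Icc_right hn) fun j hjn hjm ↦ by
          rw [innerSum_eq_zero_of_lt (by simp at hjn hjm; omega), mul_zero]

lemma dd_eq_zero_of_lt {m k : ℤ} (h : m < k) : dd m k = 0 := by
  rw [dd_eq_sum m k le_rfl, Icc_eq_empty (by omega), sum_empty]

lemma dd_eq_zero_of_neg (m : ℤ) {k : ℤ} (hk : k < 0) : dd m k = 0 := by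
  rw [dd_eq_sum m k le_rfl]
  exact sum_eq_zero fun j _ ↦ by rw [weight, binC_of_neg _ hk]; ring

def outerFactor (k j : ℤ) : ℚ :=
  -3 * (-1) ^ (k + j) * binC (2 * (k - 1)) (k - 1) / ((2 * j - 1) * (2 * j + 1))

noncomputable def outerCert (m k j : ℤ) : ℚ :=
  (k * (2 * k - m - 2) * weight k j - outerFactor k j * innerCoeff₃ m j) * innerSum m j

lemma outerCert_sub_one_self (m : ℤ) {k : ℤ} (hk : k ≠ 0) : outerCert m k (k - 1) = 0 := by
  have hσ : (-1 : ℚ) ^ (k + (k - 1)) = -1 := by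
    rw [← add_sub_assoc, zpow_sub_one₀ (by norm_num), ← two_mul, (even_two_mul k).neg_one_zpow]
    norm_num
  have h₁ : (2 * (k : ℚ) - 1) ≠ 0 := by exact_mod_cast (by omega : 2 * k - 1 ≠ 0)
  have h₃ : (2 * (k : ℚ) - 3) ≠ 0 := by exact_mod_cast (by omega : 2 * k - 3 ≠ 0)
  have hk' : (k : ℚ) ≠ 0 := by exact_mod_cast hk
  refine mul_eq_zero_of_left ?_ _
  rw [sub_eq_zero, weight, outerFactor, innerCoeff₃, hσ, binC_two_mul_self_eq hk]
  push_cast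
  rw [show 2 * ((k : ℚ) - 1) + 1 = 2 * k - 1 by ring,
    show 2 * ((k : ℚ) - 1) - 1 = 2 * k - 3 by ring, div_mul_eq_mul_div,
    eq_div_iff (mul_ne_zero h₃ h₁)]
  field_simp
  ring

lemma rel2_summand_eq (m : ℤ) {k : ℤ} (hk : k ≠ 0) (j : ℤ) :
    -4 * ((m - 1) ^ 2 - 1) * (weight (k - 1) (j - 1) * innerSum (m - 1) (j - 1)) -
        4 * (2 * (k - 1) + m + 1) * (m - k + 1) * (weight (k - 1) (j - 1) * innerSum m (j - 1)) +
        k * (2 * k - m - 2) * (weight k j * innerSum m j) =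
      outerFactor k j * (innerCoeff₁ m j * innerSum (m - 1) (j - 1) +
          innerCoeff₂ m j * innerSum m (j - 1) + innerCoeff₃ m j * innerSum m j) +
        (outerCert m k j - outerCert m k (j - 1)) := by
  have hσ₁ : (-1 : ℚ) ^ (k - 1 + (j - 1)) = (-1) ^ (k + j) := by
    rw [show k - 1 + (j - 1) = k + j - 2 by ring, zpow_sub₀ (by norm_num)]
    norm_num
  have hσ₂ : (-1 : ℚ) ^ (k + (j - 1)) = -(-1) ^ (k + j) := by
    rw [← add_sub_assoc, zpow_sub_one₀ (by norm_num)]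
    norm_num
  have h₁ : (2 * (j : ℚ) - 1) ≠ 0 := by exact_mod_cast (by omega : 2 * j - 1 ≠ 0)
  have h₂ : (2 * (j : ℚ) + 1) ≠ 0 := by exact_mod_cast (by omega : 2 * j + 1 ≠ 0)
  have h₃ : (2 * (j : ℚ) - 3) ≠ 0 := by exact_mod_cast (by omega : 2 * j - 3 ≠ 0)
  have hk' : (k : ℚ) ≠ 0 := by exact_mod_cast hk
  simp only [outerCert, weight, outerFactor, innerCoeff₁, innerCoeff₂, innerCoeff₃, hσ₁, hσ₂,
    binC_two_mul_self_eq hk]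
  push_cast
  rw [show 2 * ((j : ℚ) - 1) + 1 = 2 * j - 1 by ring,
    show 2 * ((j : ℚ) - 1) - 1 = 2 * j - 3 by ring]
  field_simp
  ring

lemma rel2_eq_zero_of_le {m k : ℤ} (hk : 1 ≤ k) (hkm : k ≤ m) : rel2 m k = 0 := by
  have h₁ : dd (m - 1) (k - 1) =
      ∑ j ∈ Icc k (m + 1), weight (k - 1) (j - 1) * innerSum (m - 1) (j - 1) := by
    rw [Int.sum_Icc_comp_sub_one (fun j ↦ weight (k - 1) j * innerSum (m - 1) j),
      add_sub_cancel_right, dd_eq_sum _ _ (by omega : m - 1 ≤ m)]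
  have h₂ : dd m (k - 1) = ∑ j ∈ Icc k (m + 1), weight (k - 1) (j - 1) * innerSum m (j - 1) := by
    rw [Int.sum_Icc_comp_sub_one (fun j ↦ weight (k - 1) j * innerSum m j),
      add_sub_cancel_right, dd_eq_sum _ _ le_rfl]
  have h₃ : dd m k = ∑ j ∈ Icc k (m + 1), weight k j * innerSum m j := dd_eq_sum _ _ (by omega)
  rw [rel2, h₁, h₂, h₃, mul_sum, mul_sum, mul_sum, ← sum_sub_distrib, ← sum_add_distrib,
    sum_congr rfl fun j _ ↦ rel2_summand_eq m (by omega) j, sum_add_distrib,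
    sum_eq_zero fun j hj ↦ by
      rw [innerSum_recurrence (by omega) (by simp at hj; omega), mul_zero],
    Int.sum_Icc_telescope _ (by omega), outerCert_sub_one_self m (by omega), outerCert,
    innerSum_eq_zero_of_lt (by omega : m < m + 1)]
  simp

lemma rel2_eq_zero_of_lt {m k : ℤ} (h : m < k) : rel2 m k = 0 := by
  rw [rel2, dd_eq_zero_of_lt (by omega : m - 1 < k - 1), dd_eq_zero_of_lt h]
  rcases (by omega : k = m + 1 ∨ m < k - 1) with rfl | h'
  · push_cast
    ring
  · rw [dd_eq_zero_of_lt h']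
    ring

lemma rel2_eq_zero_of_nonpos (m : ℤ) {k : ℤ} (hk : k ≤ 0) : rel2 m k = 0 := by
  rw [rel2, dd_eq_zero_of_neg _ (by omega : k - 1 < 0), dd_eq_zero_of_neg _ (by omega : k - 1 < 0)]
  rcases hk.lt_or_eq with hk | rfl
  · rw [dd_eq_zero_of_neg _ hk]
    ring
  · simp

theorem rel2_eq_zero (m k : ℤ) : rel2 m k = 0 := by
  rcases le_or_gt k 0 with hk | hk
  · exact rel2_eq_zero_of_nonpos m hk
  rcases lt_or_ge m k with hmk | hkm
  · exact rel2_eq_zero_of_lt hmk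
  · exact rel2_eq_zero_of_le hk hkm
end
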